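/- Every regular language is generated by a star-controlled GCID system of size (2; 2, 0, 1; 2, 0, 0) whose initial component C1 is also its only final component. -/

import Mathlib

/-!
Graph-controlled insertion-deletion (GCID) systems.

Symbols are drawn from the universal symbol set `ℕ`, strings are lists of
symbols.  A GCID system `Π = (k, V, T, A, H, i0, F, R)` has `k` components;
rules `(i, r, j)` move a string from component `i` to component `j`, where
`r` is an insertion rule `(u, η, v)_I` (rewriting `uv → uηv`) or a deletion
rule `(u, δ, v)_D` (rewriting `uδv → uv`), with `u, v ∈ V*` and `η, δ ∈ V⁺`.
-/

namespace GCIDPaper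

/-- Strings over the universal symbol set `ℕ`. -/
abbrev Word : Type := List ℕ

/-- An insertion rule `(u, s, v)_I` (when `isInsertion = true`) or a deletion
rule `(u, s, v)_D` (when `isInsertion = false`), with left context `lctx = u`,
inserted resp. deleted string `core = s`, and right context `rctx = v`. -/
structure InsDelRule : Type where
  isInsertion : Bool
  lctx : Word
  core : Word
  rctx : Word
  deriving DecidableEq

/-- The insertion rule `(u, η, v)_I`. -/
def insRule (u η v : Word) : InsDelRule := ⟨true, u, η, v⟩

/-- The deletion rule `(u, δ, v)_D`. -/
def delRule (u δ v : Word) : InsDelRule := ⟨false, u, δ, v⟩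

/-- Applying a rule to a string: the insertion rule `(u, η, v)_I` corresponds
to the rewriting `uv → uηv`, the deletion rule `(u, δ, v)_D` to `uδv → uv`. -/
def InsDelRule.Applies (r : InsDelRule) (w w' : Word) : Prop :=
  (r.isInsertion = true →
    ∃ x y, w = x ++ r.lctx ++ r.rctx ++ y ∧
      w' = x ++ r.lctx ++ r.core ++ r.rctx ++ y) ∧
  (r.isInsertion = false →
    ∃ x y, w = x ++ r.lctx ++ r.core ++ r.rctx ++ y ∧
      w' = x ++ r.lctx ++ r.rctx ++ y)

/-- A graph-controlled insertion-deletion system.  The components are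
numbered `1, …, k`; `i0` is the initial component, `F` the set of final
components, `axioms` the finite set of axioms (placed in component `i0`),
and `R` the finite set of rules `(i, r, j)`. -/
structure System : Type where
  k : ℕ
  V : Finset ℕ
  T : Finset ℕ
  axioms : Finset Word
  i0 : ℕ
  F : Finset ℕ
  R : Finset (ℕ × InsDelRule × ℕ)
  k_pos : 1 ≤ k
  T_sub_V : T ⊆ V
  axioms_over_V : ∀ w ∈ axioms, ∀ a ∈ w, a ∈ V
  i0_mem : i0 ∈ Finset.Icc 1 k
  F_sub : F ⊆ Finset.Icc 1 k
  R_wf : ∀ q ∈ R, q.1 ∈ Finset.Icc 1 k ∧ q.2.2 ∈ Finset.Icc 1 k ∧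
    q.2.1.core ≠ [] ∧ (∀ a ∈ q.2.1.lctx, a ∈ V) ∧
    (∀ a ∈ q.2.1.core, a ∈ V) ∧ (∀ a ∈ q.2.1.rctx, a ∈ V)

/-- One derivation step between configurations: `(w)_i ⇒ (w')_j` if some rule
`(i, r, j)` of the system applied to `w` yields `w'`. -/
def Step (S : System) (c c' : Word × ℕ) : Prop :=
  ∃ q ∈ S.R, q.1 = c.2 ∧ q.2.2 = c'.2 ∧ q.2.1.Applies c.1 c'.1

/-- The reflexive-transitive closure `⇒*` of the step relation. -/
def Derives (S : System) : Word × ℕ → Word × ℕ → Prop :=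
  Relation.ReflTransGen (Step S)

/-- The language generated:
`L(Π) = { w ∈ T* : (x)_{i0} ⇒* (w)_{i_f} for some axiom x and some i_f ∈ F }`. -/
def language (S : System) : Set Word :=
  { w | (∀ a ∈ w, a ∈ S.T) ∧
    ∃ x ∈ S.axioms, ∃ f ∈ S.F, Derives S (x, S.i0) (w, f) }

/-- A single rule obeys the size bounds `(n, i', i''; m, j', j'')`. -/
def InsDelRule.SizeLE (r : InsDelRule) (n i' i'' m j' j'' : ℕ) : Prop :=
  (r.isInsertion = true →
    r.core.length ≤ n ∧ r.lctx.length ≤ i' ∧ r.rctx.length ≤ i'') ∧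
  (r.isInsertion = false →
    r.core.length ≤ m ∧ r.lctx.length ≤ j' ∧ r.rctx.length ≤ j'')

/-- The system has size `(k; n, i', i''; m, j', j'')`. -/
def HasSize (S : System) (k n i' i'' m j' j'' : ℕ) : Prop :=
  S.k = k ∧ ∀ q ∈ S.R, q.2.1.SizeLE n i' i'' m j' j''

/-- Star-controlled: the underlying undirected control graph (with an edge
`{Ci, Cj}` whenever there is a rule `(i, r, j)`) has exactly the edge set
`{ {C1, Ci} : 2 ≤ i ≤ k }`; in particular there are no loops. -/
def StarControlled (S : System) : Prop :=
  (∀ q ∈ S.R, ∃ i ∈ Finset.Icc 2 S.k, ({q.1, q.2.2} : Finset ℕ) = {1, i}) ∧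
  (∀ i ∈ Finset.Icc 2 S.k, ∃ q ∈ S.R, ({q.1, q.2.2} : Finset ℕ) = {1, i})

/-- The class `GCID(k; n, i', i''; m, j', j'')` of languages generated by GCID
systems of the given size. -/
def GCIDClass (k n i' i'' m j' j'' : ℕ) : Set (Set Word) :=
  { L | ∃ S : System, HasSize S k n i' i'' m j' j'' ∧ language S = L }

/-- The class `GCID_S(k; n, i', i''; m, j', j'')` of languages generated by
star-controlled GCID systems of the given size. -/
def GCID_S (k n i' i'' m j' j'' : ℕ) : Set (Set Word) :=
  { L | ∃ S : System, StarControlled S ∧ HasSize S k n i' i'' m j' j'' ∧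
    language S = L }

/-!
Let `M` be a DFA accepting `L`. Component `C1` holds sentential forms `w $q`, where `$q` is a
marker symbol (all markers lie above `T`) recording the state `q` that `M` reaches on `w`. A
letter `a` is read in two round trips through `C2`, each an insertion with a one-symbol right
context followed by a context-free deletion:
`w $q ⇒ w r x $q ⇒ w r ⇒ w a $q' r ⇒ w a $q'`, with `r = read q a`, `x = aux q a`,
`q' = δ(q, a)`; an accepting `$q` is erased by `w $q ⇒ w f $q ⇒ w` with `f = final q`.
Since deletions see no context they may fire out of order, but the only effect of that is a
stray `aux` marker, which is never deleted afterwards. So every reachable configuration is a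
prefix of terminals and stray markers, followed by one of six short tails, and a purely
terminal word can only arise from erasing an accepting `$q`.
-/

theorem eq_of_append_cons_eq_append_cons {α : Type*} {x y v z : List α} {c c' : α}
    (h : x ++ c :: y = v ++ c' :: z) (hv : c ∉ v) (hz : c ∉ z) :
    x = v ∧ c = c' ∧ y = z := by
  rcases List.append_eq_append_iff.1 h with
    ⟨_ | ⟨b, a'⟩, rfl, h'⟩ | ⟨_ | ⟨b, c''⟩, rfl, h'⟩
  · simp_all
  · simp only [List.cons_append, List.cons.injEq] at h'
    exact absurd (by simp [h'.1]) hv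
  · simp_all
  · simp only [List.cons_append, List.cons.injEq] at h'
    exact absurd (by simp [h'.2]) hz

namespace InsDelRule

variable {v w w' η : Word}

theorem mem_of_applies_insRule {k : ℕ} (h : (insRule [] η [k]).Applies w w') : k ∈ w := by
  obtain ⟨x, y, rfl, -⟩ := h.1 rfl
  simp [insRule]

theorem eq_of_applies_insRule {k k' : ℕ} {z : Word}
    (h : (insRule [] η [k]).Applies (v ++ k' :: z) w') (hv : k ∉ v) (hz : k ∉ z) :
    k = k' ∧ w' = v ++ η ++ k' :: z := by
  obtain ⟨x, y, hw, rfl⟩ := h.1 rfl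
  obtain ⟨rfl, rfl, rfl⟩ :=
    eq_of_append_cons_eq_append_cons (by simpa [insRule] using hw.symm) hv hz
  simp [insRule]

theorem eq_of_applies_delRule_single {c c' : ℕ} {z : Word}
    (h : (delRule [] [c] []).Applies (v ++ c' :: z) w') (hv : c ∉ v) (hz : c ∉ z) :
    c = c' ∧ w' = v ++ z := by
  obtain ⟨x, y, hw, rfl⟩ := h.2 rfl
  obtain ⟨rfl, rfl, rfl⟩ :=
    eq_of_append_cons_eq_append_cons (by simpa [delRule] using hw.symm) hv hz
  simp [delRule]

theorem eq_of_applies_delRule_pair {d d' c c' : ℕ} {z : Word}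
    (h : (delRule [] [d, c] []).Applies (v ++ d' :: c' :: z) w') (hv : c ∉ v) (hd' : d' ≠ c)
    (hz : c ∉ z) : d = d' ∧ c = c' ∧ w' = v ++ z := by
  obtain ⟨x, y, hw, rfl⟩ := h.2 rfl
  have hw' : (x ++ [d]) ++ c :: y = (v ++ [d']) ++ c' :: z := by
    simpa [delRule] using hw.symm
  obtain ⟨hx, rfl, rfl⟩ := eq_of_append_cons_eq_append_cons hw' (by simp [hv, hd'.symm]) hz
  obtain ⟨rfl, hd⟩ := List.append_inj' hx rfl
  exact ⟨List.singleton_inj.1 hd, rfl, by simp [delRule]⟩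

end InsDelRule

theorem Step.of_insRule {S : System} {i j k : ℕ} {η v z : Word}
    (hr : (i, insRule [] η [k], j) ∈ S.R) : Step S (v ++ k :: z, i) (v ++ η ++ k :: z, j) :=
  ⟨_, hr, rfl, rfl, fun _ => ⟨v, z, by simp [insRule], by simp [insRule]⟩, nofun⟩

theorem Step.of_delRule {S : System} {i j : ℕ} {δ v z : Word}
    (hr : (i, delRule [] δ [], j) ∈ S.R) : Step S (v ++ δ ++ z, i) (v ++ z, j) :=
  ⟨_, hr, rfl, rfl, nofun, fun _ => ⟨v, z, by simp [delRule], by simp [delRule]⟩⟩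

open Finset in
def System.ofRules (k : ℕ) (T : Finset ℕ) (A : Finset Word) (i0 : ℕ) (F : Finset ℕ)
    (R : Finset (ℕ × InsDelRule × ℕ)) (hk : 1 ≤ k) (hi0 : i0 ∈ Icc 1 k)
    (hF : F ⊆ Icc 1 k)
    (hR : ∀ q ∈ R, q.1 ∈ Icc 1 k ∧ q.2.2 ∈ Icc 1 k ∧ q.2.1.core ≠ []) : System where
  k := k
  V := T ∪ A.biUnion List.toFinset ∪
    R.biUnion fun q => (q.2.1.lctx ++ q.2.1.core ++ q.2.1.rctx).toFinset
  T := T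
  axioms := A
  i0 := i0
  F := F
  R := R
  k_pos := hk
  T_sub_V := subset_union_left.trans subset_union_left
  axioms_over_V w hw a ha := by
    simp only [mem_union, mem_biUnion]
    exact .inl (.inr ⟨w, hw, by simpa⟩)
  i0_mem := hi0
  F_sub := hF
  R_wf q hq := by
    refine ⟨(hR q hq).1, (hR q hq).2.1, (hR q hq).2.2, ?_, ?_, ?_⟩ <;>
    · intro a ha
      simp only [mem_union, mem_biUnion]
      exact .inr ⟨q, hq, by simp [ha]⟩

namespace OfDFA

open Finset

variable {σ : Type} {T : Finset ℕ} {M : DFA ℕ σ}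

variable (T M) in
def readState (u : Word) : σ := M.eval (u.filter (· ∈ T))

theorem readState_nil : readState T M [] = M.start := rfl

theorem readState_append_of_mem {u : Word} {a : ℕ} (ha : a ∈ T) :
    readState T M (u ++ [a]) = M.step (readState T M u) a := by
  simp [readState, ha, DFA.eval_append_singleton]

theorem readState_append_of_not_mem {u : Word} {a : ℕ} (ha : a ∉ T) :
    readState T M (u ++ [a]) = readState T M u := by
  simp [readState, ha]

theorem readState_of_forall_mem {u : Word} (hu : ∀ a ∈ u, a ∈ T) :
    readState T M u = M.eval u := by
  rw [readState, List.filter_eq_self.2 (by simpa using hu)]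

inductive Marker (σ : Type) : Type
  | state (q : σ)
  | read (q : σ) (a : ℕ)
  | aux (q : σ) (a : ℕ)
  | final (q : σ)
  | dummy

variable [Fintype σ]

noncomputable def Marker.code : Marker σ → ℕ
  | .state q => Nat.pair 0 (Fintype.equivFin σ q)
  | .read q a => Nat.pair 1 (Nat.pair (Fintype.equivFin σ q) a)
  | .aux q a => Nat.pair 2 (Nat.pair (Fintype.equivFin σ q) a)
  | .final q => Nat.pair 3 (Fintype.equivFin σ q)
  | .dummy => Nat.pair 4 0

theorem Marker.code_injective : Function.Injective (Marker.code (σ := σ)) := by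
  intro m m' h
  cases m <;> cases m' <;> simp_all [code, Nat.pair_eq_pair, Fin.val_inj]

variable (T) in
noncomputable def ctrl (m : Marker σ) : ℕ := T.sup id + 1 + m.code

@[simp] theorem ctrl_inj {m m' : Marker σ} : ctrl T m = ctrl T m' ↔ m = m' := by
  simp [ctrl, Marker.code_injective.eq_iff]

@[simp] theorem ctrl_not_mem (m : Marker σ) : ctrl T m ∉ T := fun h => by
  have := le_sup (f := id) h
  simp only [ctrl, id] at this
  omega

theorem ctrl_ne_of_mem {a : ℕ} (ha : a ∈ T) (m : Marker σ) : ctrl T m ≠ a :=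
  fun h => ctrl_not_mem m (h ▸ ha)

variable (σ T) in
def Settled (u : Word) : Prop := ∀ m : Marker σ, (∀ q a, m ≠ .aux q a) → ctrl T m ∉ u

theorem settled_nil : Settled σ T [] := fun _ _ => List.not_mem_nil

theorem Settled.append_of_mem {u : Word} {a : ℕ} (hu : Settled σ T u) (ha : a ∈ T) :
    Settled σ T (u ++ [a]) := fun m hm h => by
  rcases List.mem_append.1 h with h | h
  · exact hu m hm h
  · exact ctrl_ne_of_mem ha m (List.mem_singleton.1 h)

theorem Settled.append_aux {u : Word} {q : σ} {a : ℕ} (hu : Settled σ T u) :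
    Settled σ T (u ++ [ctrl T (.aux q a)]) := fun m hm h => by
  rcases List.mem_append.1 h with h | h
  · exact hu m hm h
  · exact hm q a (ctrl_inj.1 (List.mem_singleton.1 h))

def up (η : Word) (k : ℕ) : ℕ × InsDelRule × ℕ := (1, insRule [] η [k], 2)

def down (δ : Word) : ℕ × InsDelRule × ℕ := (2, delRule [] δ [], 1)

variable (T M) in
open Classical in
noncomputable def rules : Finset (ℕ × InsDelRule × ℕ) :=
  -- never applicable: it only provides the edge `{C1, C2}` when `T` or `M.accept` is empty
  {up [ctrl T (.dummy : Marker σ)] (ctrl T (.dummy : Marker σ))} ∪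
  (((univ : Finset σ) ×ˢ T).biUnion fun (q, a) =>
    {up [ctrl T (.read q a), ctrl T (.aux q a)] (ctrl T (.state q)),
     down [ctrl T (.aux q a), ctrl T (.state q)],
     up [a, ctrl T (.state (M.step q a))] (ctrl T (.read q a)),
     down [ctrl T (.read q a)]}) ∪
  (((univ : Finset σ).filter (· ∈ M.accept)).biUnion fun q =>
    {up [ctrl T (.final q)] (ctrl T (.state q)),
     down [ctrl T (.final q), ctrl T (.state q)]})

theorem mem_rules {r : ℕ × InsDelRule × ℕ} : r ∈ rules T M ↔
    r = up [ctrl T (.dummy : Marker σ)] (ctrl T (.dummy : Marker σ)) ∨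
    (∃ q, ∃ a ∈ T,
      r = up [ctrl T (.read q a), ctrl T (.aux q a)] (ctrl T (.state q)) ∨
      r = down [ctrl T (.aux q a), ctrl T (.state q)] ∨
      r = up [a, ctrl T (.state (M.step q a))] (ctrl T (.read q a)) ∨
      r = down [ctrl T (.read q a)]) ∨
    (∃ q ∈ M.accept,
      r = up [ctrl T (.final q)] (ctrl T (.state q)) ∨
      r = down [ctrl T (.final q), ctrl T (.state q)]) := by
  simp [rules]

theorem up_or_down_of_mem_rules {r : ℕ × InsDelRule × ℕ} (hr : r ∈ rules T M) :
    (∃ η k, η ≠ [] ∧ η.length ≤ 2 ∧ r = up η k) ∨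
      ∃ δ, δ ≠ [] ∧ δ.length ≤ 2 ∧ r = down δ := by
  rcases mem_rules.1 hr with rfl | ⟨q, a, -, rfl | rfl | rfl | rfl⟩ | ⟨q, -, rfl | rfl⟩ <;>
  first
  | exact .inl ⟨_, _, List.cons_ne_nil _ _, by simp, rfl⟩
  | exact .inr ⟨_, List.cons_ne_nil _ _, by simp, rfl⟩

variable (T M) in
noncomputable def system : System :=
  .ofRules 2 T {[ctrl T (.state M.start)]} 1 {1} (rules T M) (by norm_num) (by simp) (by simp)
    fun r hr => by
      rcases up_or_down_of_mem_rules hr with ⟨η, k, hη, -, rfl⟩ | ⟨δ, hδ, -, rfl⟩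
      · exact ⟨by simp [up], by simp [up], hη⟩
      · exact ⟨by simp [down], by simp [down], hδ⟩

theorem starControlled_system : StarControlled (system T M) := by
  refine ⟨fun r hr => ⟨2, by simp [system, System.ofRules], ?_⟩, fun i hi => ?_⟩
  · rcases up_or_down_of_mem_rules hr with ⟨η, k, -, -, rfl⟩ | ⟨δ, -, -, rfl⟩
    · rfl
    · exact pair_comm 2 1
  · obtain rfl : i = 2 := by simpa [system, System.ofRules] using hi
    exact ⟨_, mem_rules.2 (.inl rfl), rfl⟩

theorem hasSize_system : HasSize (system T M) 2 2 0 1 2 0 0 := by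
  refine ⟨rfl, fun r hr => ?_⟩
  rcases up_or_down_of_mem_rules hr with ⟨η, k, -, hη, rfl⟩ | ⟨δ, -, hδ, rfl⟩
  · exact ⟨fun _ => ⟨hη, le_rfl, le_rfl⟩, nofun⟩
  · exact ⟨nofun, fun _ => ⟨hδ, le_rfl, le_rfl⟩⟩

theorem step_up {η v z : Word} {k : ℕ} (hr : up η k ∈ rules T M) :
    Step (system T M) (v ++ k :: z, 1) (v ++ η ++ k :: z, 2) :=
  Step.of_insRule hr

theorem step_down {δ v z : Word} (hr : down δ ∈ rules T M) :
    Step (system T M) (v ++ δ ++ z, 2) (v ++ z, 1) :=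
  Step.of_delRule hr

variable (T M) in
inductive Invariant : Word × ℕ → Prop
  | state {u q} : Settled σ T u → readState T M u = q →
      Invariant (u ++ [ctrl T (.state q)], 1)
  | read {u q a} : Settled σ T u → readState T M u = q →
      Invariant (u ++ [ctrl T (.read q a)], 1)
  | done {u} : Settled σ T u → readState T M u ∈ M.accept → Invariant (u, 1)
  | opened {u q a} : Settled σ T u → readState T M u = q →
      Invariant (u ++ [ctrl T (.read q a), ctrl T (.aux q a), ctrl T (.state q)], 2)
  | written {u q a} : a ∈ T → Settled σ T u → readState T M u = q →
      Invariant (u ++ [a, ctrl T (.state (M.step q a)), ctrl T (.read q a)], 2)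
  | halted {u q} : Settled σ T u → readState T M u = q → q ∈ M.accept →
      Invariant (u ++ [ctrl T (.final q), ctrl T (.state q)], 2)

namespace Invariant

open InsDelRule

variable {w w' : Word} {q : σ} {a : ℕ}

theorem open_step (h : Invariant T M (w, 1))
    (happ : (insRule [] [ctrl T (.read q a), ctrl T (.aux q a)] [ctrl T (.state q)]).Applies
      w w') :
    Invariant T M (w', 2) := by
  cases h with
  | state hu hq =>
    obtain ⟨hk, rfl⟩ := eq_of_applies_insRule happ (hu _ (by simp)) (by simp)
    obtain rfl : q = _ := by simpa using hk
    simpa using opened (a := a) hu hq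
  | read hu hq =>
    obtain ⟨hk, -⟩ := eq_of_applies_insRule happ (hu _ (by simp)) (by simp)
    simp at hk
  | done hu => exact absurd (mem_of_applies_insRule happ) (hu _ (by simp))

theorem write_step (ha : a ∈ T) (h : Invariant T M (w, 1))
    (happ : (insRule [] [a, ctrl T (.state (M.step q a))] [ctrl T (.read q a)]).Applies
      w w') :
    Invariant T M (w', 2) := by
  cases h with
  | state hu hq =>
    obtain ⟨hk, -⟩ := eq_of_applies_insRule happ (hu _ (by simp)) (by simp)
    simp at hk
  | read hu hq =>
    obtain ⟨hk, rfl⟩ := eq_of_applies_insRule happ (hu _ (by simp)) (by simp)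
    obtain ⟨rfl, rfl⟩ : q = _ ∧ a = _ := by simpa using hk
    simpa using written ha hu hq
  | done hu => exact absurd (mem_of_applies_insRule happ) (hu _ (by simp))

theorem halt_step (hq : q ∈ M.accept) (h : Invariant T M (w, 1))
    (happ : (insRule [] [ctrl T (.final q)] [ctrl T (.state q)]).Applies w w') :
    Invariant T M (w', 2) := by
  cases h with
  | state hu hq' =>
    obtain ⟨hk, rfl⟩ := eq_of_applies_insRule happ (hu _ (by simp)) (by simp)
    obtain rfl : q = _ := by simpa using hk
    simpa using halted hu hq' hq
  | read hu hq' =>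
    obtain ⟨hk, -⟩ := eq_of_applies_insRule happ (hu _ (by simp)) (by simp)
    simp at hk
  | done hu => exact absurd (mem_of_applies_insRule happ) (hu _ (by simp))

theorem idle_step (h : Invariant T M (w, 1))
    (happ : (insRule [] [ctrl T (.dummy : Marker σ)] [ctrl T (.dummy : Marker σ)]).Applies
      w w') :
    Invariant T M (w', 2) := by
  cases h with
  | state hu _ | read hu _ =>
    obtain ⟨hk, -⟩ := eq_of_applies_insRule happ (hu _ (by simp)) (by simp)
    simp at hk
  | done hu => exact absurd (mem_of_applies_insRule happ) (hu _ (by simp))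

theorem close_step (h : Invariant T M (w, 2))
    (happ : (delRule [] [ctrl T (.aux q a), ctrl T (.state q)] []).Applies w w') :
    Invariant T M (w', 1) := by
  cases h with
  | @opened u q' a' hu hq =>
    obtain ⟨-, hk, rfl⟩ := eq_of_applies_delRule_pair (v := u ++ [ctrl T (.read q' a')])
      (by simpa using happ) (by simp [hu (.state q) (by simp)]) (by simp) (by simp)
    obtain rfl : q = q' := by simpa using hk
    simpa using read hu hq
  | written ha hu hq =>
    obtain ⟨hd, -⟩ := eq_of_applies_delRule_pair happ (hu (.state q) (by simp))
      (ctrl_ne_of_mem ha _).symm (by simp)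
    exact absurd hd (ctrl_ne_of_mem ha _)
  | halted hu hq hacc =>
    obtain ⟨hd, -⟩ :=
      eq_of_applies_delRule_pair happ (hu (.state q) (by simp)) (by simp) (by simp)
    simp at hd

theorem unread_step (h : Invariant T M (w, 2))
    (happ : (delRule [] [ctrl T (.read q a)] []).Applies w w') :
    Invariant T M (w', 1) := by
  cases h with
  | @opened u q' a' hu hq =>
    obtain ⟨hk, rfl⟩ := eq_of_applies_delRule_single happ (hu (.read q a) (by simp)) (by simp)
    have hq' : readState T M (u ++ [ctrl T (.aux q' a')]) = q' := by
      rw [readState_append_of_not_mem (ctrl_not_mem _), hq]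
    simpa using state hu.append_aux hq'
  | @written u q' b hb hu hq =>
    obtain ⟨hk, rfl⟩ := eq_of_applies_delRule_single (v := u ++ [b, _]) (by simpa using happ)
      (by simp [hu (.read q a) (by simp), ctrl_ne_of_mem hb]) (by simp)
    have hq' : readState T M (u ++ [b]) = M.step q' b := by rw [readState_append_of_mem hb, hq]
    simpa using state (hu.append_of_mem hb) hq'
  | halted hu hq hacc =>
    obtain ⟨hk, -⟩ := eq_of_applies_delRule_single (v := _ ++ [_]) (by simpa using happ)
      (by simp [hu (.read q a) (by simp)]) (by simp)
    simp at hk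

theorem erase_step (h : Invariant T M (w, 2))
    (happ : (delRule [] [ctrl T (.final q), ctrl T (.state q)] []).Applies w w') :
    Invariant T M (w', 1) := by
  cases h with
  | @opened u q' a' hu hq =>
    obtain ⟨hd, -⟩ := eq_of_applies_delRule_pair (v := u ++ [ctrl T (.read q' a')])
      (by simpa using happ) (by simp [hu (.state q) (by simp)]) (by simp) (by simp)
    simp at hd
  | written ha hu hq =>
    obtain ⟨hd, -⟩ := eq_of_applies_delRule_pair happ (hu (.state q) (by simp))
      (ctrl_ne_of_mem ha _).symm (by simp)
    exact absurd hd (ctrl_ne_of_mem ha _)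
  | halted hu hq hacc =>
    obtain ⟨-, hk, rfl⟩ := eq_of_applies_delRule_pair happ (hu (.state q) (by simp)) (by simp)
      (by simp)
    obtain rfl : q = _ := by simpa using hk
    simpa using done hu (hq ▸ hacc)

theorem step {c c' : Word × ℕ} (h : Invariant T M c) (hs : Step (system T M) c c') :
    Invariant T M c' := by
  obtain ⟨w, i⟩ := c
  obtain ⟨w', j⟩ := c'
  obtain ⟨r, hr, rfl, rfl, happ⟩ := hs
  rcases mem_rules.1 hr with rfl | ⟨q, a, ha, rfl | rfl | rfl | rfl⟩ | ⟨q, hq, rfl | rfl⟩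
  · exact idle_step h happ
  · exact open_step h happ
  · exact close_step h happ
  · exact write_step ha h happ
  · exact unread_step h happ
  · exact halt_step hq h happ
  · exact erase_step h happ

theorem derives {c c' : Word × ℕ} (h : Invariant T M c) (hd : Derives (system T M) c c') :
    Invariant T M c' := by
  induction hd with
  | refl => exact h
  | tail _ hs ih => exact ih.step hs

theorem start : Invariant T M ([ctrl T (.state M.start)], 1) :=
  state (u := []) settled_nil readState_nil

theorem mem_accepts (h : Invariant T M (w, 1)) (hw : ∀ a ∈ w, a ∈ T) : w ∈ M.accepts := by
  cases h with
  | state | read => exact absurd (hw _ (List.mem_concat_self)) (ctrl_not_mem _)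
  | done _ hacc => rwa [readState_of_forall_mem hw] at hacc

end Invariant

theorem derives_state {w : Word} (hw : ∀ a ∈ w, a ∈ T) :
    Derives (system T M) ([ctrl T (.state M.start)], 1)
      (w ++ [ctrl T (.state (M.eval w))], 1) := by
  induction w using List.reverseRecOn with
  | nil => exact .refl
  | append_singleton u a ih =>
    have ha : a ∈ T := hw a (by simp)
    have hu : ∀ b ∈ u, b ∈ T := fun b hb => hw b (by simp [hb])
    set q := M.eval u
    have hopen : Step (system T M) (u ++ [ctrl T (.state q)], 1)
        (u ++ [ctrl T (.read q a), ctrl T (.aux q a), ctrl T (.state q)], 2) := by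
      simpa using step_up (v := u) (z := [])
        (mem_rules.2 (.inr (.inl ⟨q, a, ha, .inl rfl⟩)))
    have hclose : Step (system T M)
        (u ++ [ctrl T (.read q a), ctrl T (.aux q a), ctrl T (.state q)], 2)
        (u ++ [ctrl T (.read q a)], 1) := by
      simpa using step_down (v := u ++ [ctrl T (.read q a)]) (z := [])
        (mem_rules.2 (.inr (.inl ⟨q, a, ha, .inr (.inl rfl)⟩)))
    have hwrite : Step (system T M) (u ++ [ctrl T (.read q a)], 1)
        (u ++ [a, ctrl T (.state (M.step q a)), ctrl T (.read q a)], 2) := by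
      simpa using step_up (v := u) (z := [])
        (mem_rules.2 (.inr (.inl ⟨q, a, ha, .inr (.inr (.inl rfl))⟩)))
    have hunread : Step (system T M)
        (u ++ [a, ctrl T (.state (M.step q a)), ctrl T (.read q a)], 2)
        (u ++ [a, ctrl T (.state (M.step q a))], 1) := by
      simpa using step_down (v := u ++ [a, ctrl T (.state (M.step q a))]) (z := [])
        (mem_rules.2 (.inr (.inl ⟨q, a, ha, .inr (.inr (.inr rfl))⟩)))
    rw [DFA.eval_append_singleton, List.append_assoc]
    exact ((((ih hu).tail hopen).tail hclose).tail hwrite).tail hunread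

theorem derives_of_mem_accepts {w : Word} (hw : ∀ a ∈ w, a ∈ T) (hacc : w ∈ M.accepts) :
    Derives (system T M) ([ctrl T (.state M.start)], 1) (w, 1) := by
  have hhalt : Step (system T M) (w ++ [ctrl T (.state (M.eval w))], 1)
      (w ++ [ctrl T (.final (M.eval w)), ctrl T (.state (M.eval w))], 2) := by
    simpa using step_up (v := w) (z := [])
      (mem_rules.2 (.inr (.inr ⟨M.eval w, hacc, .inl rfl⟩)))
  have herase : Step (system T M)
      (w ++ [ctrl T (.final (M.eval w)), ctrl T (.state (M.eval w))], 2) (w, 1) := by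
    simpa using step_down (v := w) (z := [])
      (mem_rules.2 (.inr (.inr ⟨M.eval w, hacc, .inr rfl⟩)))
  exact ((derives_state hw).tail hhalt).tail herase

theorem language_system (hT : ∀ w ∈ M.accepts, ∀ a ∈ w, a ∈ T) :
    language (system T M) = M.accepts := by
  ext w
  constructor
  · rintro ⟨hwT, x, hx, f, hf, hd⟩
    obtain rfl := Finset.mem_singleton.1 hx
    obtain rfl := Finset.mem_singleton.1 hf
    exact (Invariant.start.derives hd).mem_accepts hwT
  · intro hw
    exact ⟨hT w hw, _, Finset.mem_singleton_self _, 1, Finset.mem_singleton_self _,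
      derives_of_mem_accepts (hT w hw) hw⟩

end OfDFA

/-- Every regular language (over a finite alphabet) is generated by a
star-controlled GCID system of size `(2; 2, 0, 1; 2, 0, 0)` whose initial
component `C1` is also its only final component. -/
theorem regular_subset_gcid_s_2_201_200
    (L : Set Word) (hreg : Language.IsRegular (L : Language ℕ))
    (T : Finset ℕ) (hT : ∀ w ∈ L, ∀ a ∈ w, a ∈ T) :
    ∃ S : System, StarControlled S ∧ HasSize S 2 2 0 1 2 0 0 ∧
      S.i0 = 1 ∧ S.F = {1} ∧ language S = L := by
  obtain ⟨σ, _, M, hM⟩ := hreg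
  refine ⟨OfDFA.system T M, OfDFA.starControlled_system, OfDFA.hasSize_system, rfl, rfl, ?_⟩
  rw [OfDFA.language_system (hM ▸ hT)]
  exact hM

end GCIDPaper
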